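/- Let β > 0, c := 1/(9β), and let ũ : ℝ × ℝ → ℝ be three times continuously differentiable. Define u(t,x) := φ_c(x + ct) + √β · ũ(t, x + t/(3β)). Then u satisfies the defocusing mKdV equation u_t + (u_{xx} − u³)_x = 0 at every point of ℝ × ℝ if and only if ũ = ũ(t,y) satisfies the perturbed Gardner equation ũ_t + (ũ_{yy} + ũ² − β·ũ³)_y = 3·[(φ_c² − c)·ũ + √β·(φ_c + √c)·ũ²]_y at every point, where in the last equation φ_c is evaluated at y − 2ct. -/

import Mathlib

/-!
Since `t / (3β) = 3ct`, the perturbation is evaluated at `y = x + 3ct`. The kink satisfies the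
first-order equation `φ_c' = (c - φ_c²)/√2`, hence `φ_c'' = φ_c³ - cφ_c`, so in the mKdV flux
`u_xx - u³` the pure kink terms collapse to `-cφ_c`, whose derivative cancels the kink's time
derivative `cφ_c'`. Expanding the cube, the remaining terms are exactly `√β` times the Gardner
flux minus the interaction terms, once `(√β)² = β` and `√β · √c = 1/3` are used; the transport
term `3c ũ_y` from the moving frame cancels as well. Thus the mKdV residual of `u` at `(t, x)` is
`√β` times the perturbed Gardner residual of `ũ` at `(t, x + 3ct)`.
-/

/-- The mKdV kink profile `φ_c(s) = √c · tanh(√c · s / √2)`. -/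
noncomputable def kink (c : ℝ) (s : ℝ) : ℝ :=
  Real.sqrt c * Real.tanh (Real.sqrt c * s / Real.sqrt 2)

/-- `u` solves the defocusing mKdV equation `u_t + (u_{xx} - u³)_x = 0`
pointwise on ℝ × ℝ (first variable is time, second is space). -/
def IsMKdVSolution (u : ℝ → ℝ → ℝ) : Prop :=
  ∀ t x : ℝ,
    deriv (fun τ => u τ x) t
      + deriv (fun ξ => deriv (deriv (u t)) ξ - (u t ξ) ^ 3) x = 0

open Real Function

theorem Real.hasDerivAt_tanh (x : ℝ) : HasDerivAt tanh (1 - tanh x ^ 2) x := by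
  have h := (hasDerivAt_sinh x).fun_div (hasDerivAt_cosh x) (cosh_pos x).ne'
  rw [show tanh = fun z => sinh z / cosh z from funext tanh_eq_sinh_div_cosh]
  refine h.congr_deriv ?_
  field_simp

section Kink

variable {c : ℝ}

theorem hasDerivAt_kink (hc : 0 ≤ c) (s : ℝ) :
    HasDerivAt (kink c) ((c - kink c s ^ 2) / √2) s := by
  have h := ((hasDerivAt_tanh _).comp s
    (((hasDerivAt_id s).const_mul √c).div_const √2)).const_mul √c
  refine h.congr_deriv ?_
  simp only [kink, id]
  linear_combination sq_sqrt hc / √2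

theorem differentiable_kink (hc : 0 ≤ c) : Differentiable ℝ (kink c) :=
  fun s => (hasDerivAt_kink hc s).differentiableAt

theorem deriv_kink (hc : 0 ≤ c) : deriv (kink c) = fun s => (c - kink c s ^ 2) / √2 :=
  funext fun s => (hasDerivAt_kink hc s).deriv

theorem differentiable_deriv_kink (hc : 0 ≤ c) : Differentiable ℝ (deriv (kink c)) := by
  rw [deriv_kink hc]
  exact ((differentiable_const c).sub ((differentiable_kink hc).pow 2)).div_const _

theorem deriv_deriv_kink (hc : 0 ≤ c) (s : ℝ) :
    deriv (deriv (kink c)) s = kink c s ^ 3 - c * kink c s := by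
  have h := (((hasDerivAt_kink hc s).fun_pow 2).const_sub c).div_const √2
  rw [deriv_kink hc, h.deriv]
  have h2 : (√2 : ℝ) ^ 2 = 2 := sq_sqrt zero_le_two
  field_simp
  linear_combination (kink c s * c - kink c s ^ 3) * h2

end Kink

theorem deriv_comp_add_const_add {f g : ℝ → ℝ} (hf : Differentiable ℝ f)
    (hg : Differentiable ℝ g) (s a b : ℝ) :
    deriv (fun x => f (x + a) + s * g (x + b))
      = fun x => deriv f (x + a) + s * deriv g (x + b) := by
  funext x
  exact (((hf _).hasDerivAt.comp_add_const x a).add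
    (((hg _).hasDerivAt.comp_add_const x b).const_mul s)).deriv

theorem hasDerivAt_comp_line {v : ℝ → ℝ → ℝ} {t x a : ℝ}
    (hv : DifferentiableAt ℝ (uncurry v) (t, x + a * t)) :
    HasDerivAt (fun τ => v τ (x + a * τ))
      (deriv (fun τ => v τ (x + a * t)) t + a * deriv (v t) (x + a * t)) t := by
  set L := fderiv ℝ (uncurry v) (t, x + a * t)
  have hL : HasFDerivAt (uncurry v) L (t, x + a * t) := hv.hasFDerivAt
  have h_t : HasDerivAt (fun τ => v τ (x + a * t)) (L (1, 0)) t :=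
    hL.comp_hasDerivAt (f := fun τ => (τ, x + a * t)) t
      ((hasDerivAt_id' t).prodMk (hasDerivAt_const t _))
  have h_y : HasDerivAt (v t) (L (0, 1)) (x + a * t) :=
    hL.comp_hasDerivAt (f := fun y => (t, y)) _
      ((hasDerivAt_const _ t).prodMk (hasDerivAt_id' _))
  have h_line : HasDerivAt (fun τ => v τ (x + a * τ)) (L (1, a * 1)) t :=
    hL.comp_hasDerivAt (f := fun τ => (τ, x + a * τ)) t
      ((hasDerivAt_id' t).prodMk (((hasDerivAt_id' t).const_mul a).const_add x))
  rw [h_t.deriv, h_y.deriv]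
  refine h_line.congr_deriv ?_
  rw [show ((1 : ℝ), a * 1) = (1, 0) + a • (0, 1) by simp, map_add, map_smul, smul_eq_mul]

noncomputable def mKdVFlux (f : ℝ → ℝ) (x : ℝ) : ℝ :=
  deriv (deriv f) x - f x ^ 3

noncomputable def gardnerFlux (β : ℝ) (w : ℝ → ℝ) (y : ℝ) : ℝ :=
  deriv (deriv w) y + w y ^ 2 - β * w y ^ 3

noncomputable def kinkInteraction (β c a : ℝ) (w : ℝ → ℝ) (y : ℝ) : ℝ :=
  (kink c (y - a) ^ 2 - c) * w y + √β * (kink c (y - a) + √c) * w y ^ 2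

theorem differentiable_gardnerFlux (β : ℝ) {w : ℝ → ℝ} (hw : ContDiff ℝ 3 w) :
    Differentiable ℝ (gardnerFlux β w) := by
  have hw'' : Differentiable ℝ (deriv (deriv w)) :=
    (hw.iterate_deriv' 1 2).differentiable one_ne_zero
  have hw0 : Differentiable ℝ w := hw.differentiable (by norm_num)
  unfold gardnerFlux
  fun_prop

section Perturbation

variable {β c : ℝ}

theorem sqrt_mul_sqrt_eq_third (hβ : 0 < β) (hc : c = 1 / (9 * β)) : √β * √c = 1 / 3 := by
  rw [← sqrt_mul hβ.le, hc, show β * (1 / (9 * β)) = (1 / 3) ^ 2 by field_simp; norm_num]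
  exact sqrt_sq (by norm_num)

theorem mKdVFlux_kink_add (hβ : 0 < β) (hc : c = 1 / (9 * β)) {g : ℝ → ℝ}
    (hg : ContDiff ℝ 2 g) (a b x : ℝ) :
    mKdVFlux (fun ξ => kink c (ξ + a) + √β * g (ξ + b)) x
      = -c * kink c (x + a) - 3 * c * √β * g (x + b)
        + √β * (gardnerFlux β g (x + b) - 3 * kinkInteraction β c (b - a) g (x + b)) := by
  have hc0 : 0 ≤ c := by rw [hc]; positivity
  have hg1 : ContDiff ℝ (1 + 1) g := hg
  have hgd : Differentiable ℝ g := hg.differentiable (by norm_num)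
  have hg'd : Differentiable ℝ (deriv g) :=
    (contDiff_succ_iff_deriv.mp hg1).2.2.differentiable one_ne_zero
  simp only [mKdVFlux, gardnerFlux, kinkInteraction,
    deriv_comp_add_const_add (differentiable_kink hc0) hgd,
    deriv_comp_add_const_add (differentiable_deriv_kink hc0) hg'd, deriv_deriv_kink hc0,
    show x + b - (b - a) = x + a by ring]
  linear_combination (-√β * g (x + b) ^ 3) * sq_sqrt hβ.le
    + (3 * √β * g (x + b) ^ 2) * sqrt_mul_sqrt_eq_third hβ hc

theorem differentiable_kinkInteraction (hc : 0 ≤ c) (a : ℝ) {w : ℝ → ℝ}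
    (hw : Differentiable ℝ w) : Differentiable ℝ (kinkInteraction β c a w) := by
  have hk := differentiable_kink hc
  unfold kinkInteraction
  fun_prop

theorem mKdV_residual_kink_add (hβ : 0 < β) (hc : c = 1 / (9 * β))
    {v : ℝ → ℝ → ℝ} (hv : ContDiff ℝ 3 (uncurry v)) (t x : ℝ) :
    deriv (fun τ => kink c (x + c * τ) + √β * v τ (x + 3 * c * τ)) t
      + deriv (mKdVFlux fun ξ => kink c (ξ + c * t) + √β * v t (ξ + 3 * c * t)) x
    = √β * (deriv (fun τ => v τ (x + 3 * c * t)) t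
        + deriv (gardnerFlux β (v t)) (x + 3 * c * t)
        - 3 * deriv (kinkInteraction β c (2 * c * t) (v t)) (x + 3 * c * t)) := by
  have hc0 : 0 ≤ c := by rw [hc]; positivity
  have hvt : ContDiff ℝ 3 (v t) := hv.comp (contDiff_const.prodMk contDiff_id)
  have hvtd : Differentiable ℝ (v t) := hvt.differentiable (by norm_num)
  have h_kink := (differentiable_kink hc0 _).hasDerivAt.comp t
    (((hasDerivAt_id' t).const_mul c).const_add x)
  have h_time : HasDerivAt (fun τ => kink c (x + c * τ) + √β * v τ (x + 3 * c * τ))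
      (deriv (kink c) (x + c * t) * (c * 1) + √β * (deriv (fun τ => v τ (x + 3 * c * t)) t
        + 3 * c * deriv (v t) (x + 3 * c * t))) t :=
    h_kink.fun_add
      ((hasDerivAt_comp_line (hv.differentiable (by norm_num) (t, x + 3 * c * t))).const_mul √β)
  have h_flux : HasDerivAt (fun ξ => -c * kink c (ξ + c * t) - 3 * c * √β * v t (ξ + 3 * c * t)
        + √β * (gardnerFlux β (v t) (ξ + 3 * c * t)
          - 3 * kinkInteraction β c (2 * c * t) (v t) (ξ + 3 * c * t)))
      (-c * deriv (kink c) (x + c * t) - 3 * c * √β * deriv (v t) (x + 3 * c * t)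
        + √β * (deriv (gardnerFlux β (v t)) (x + 3 * c * t)
          - 3 * deriv (kinkInteraction β c (2 * c * t) (v t)) (x + 3 * c * t))) x :=
    ((((differentiable_kink hc0 _).hasDerivAt.comp_add_const x _).const_mul _).sub
      (((hvtd _).hasDerivAt.comp_add_const x _).const_mul _)).add
      ((((differentiable_gardnerFlux β hvt _).hasDerivAt.comp_add_const x _).sub
        (((differentiable_kinkInteraction hc0 _ hvtd _).hasDerivAt.comp_add_const x _).const_mul
          3)).const_mul _)
  have h_flux_eq := funext (mKdVFlux_kink_add hβ hc (hvt.of_le (by norm_num)) (c * t) (3 * c * t))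
  rw [show 3 * c * t - c * t = 2 * c * t by ring] at h_flux_eq
  rw [h_time.deriv, h_flux_eq, h_flux.deriv]
  ring

end Perturbation

theorem stmt11 (β : ℝ) (hβ : 0 < β) (c : ℝ) (hc : c = 1 / (9 * β))
    (v : ℝ → ℝ → ℝ) (hv : ContDiff ℝ 3 (Function.uncurry v)) :
    IsMKdVSolution
        (fun t x => kink c (x + c * t) + Real.sqrt β * v t (x + t / (3 * β)))
      ↔ (∀ t y : ℝ,
        deriv (fun τ => v τ y) t
          + deriv (fun η => deriv (deriv (v t)) η + (v t η) ^ 2 - β * (v t η) ^ 3) y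
        = 3 * deriv (fun η =>
            ((kink c (η - 2 * c * t)) ^ 2 - c) * v t η
              + Real.sqrt β * (kink c (η - 2 * c * t) + Real.sqrt c) * (v t η) ^ 2) y) := by
  have h_speed : ∀ τ, τ / (3 * β) = 3 * c * τ := fun τ => by rw [hc]; field_simp; ring
  have h_sqrt : √β ≠ 0 := (sqrt_pos.mpr hβ).ne'
  change (∀ t x, deriv (fun τ => kink c (x + c * τ) + √β * v τ (x + τ / (3 * β))) t
      + deriv (mKdVFlux fun ξ => kink c (ξ + c * t) + √β * v t (ξ + t / (3 * β))) x = 0)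
    ↔ ∀ t y, deriv (fun τ => v τ y) t + deriv (gardnerFlux β (v t)) y
      = 3 * deriv (kinkInteraction β c (2 * c * t) (v t)) y
  simp only [h_speed, mKdV_residual_kink_add hβ hc hv, mul_eq_zero, h_sqrt, false_or, sub_eq_zero]
  exact forall_congr' fun t => ⟨fun h y => by simpa using h (y - 3 * c * t), fun h x => h _⟩
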